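/- Let m ≥ 3 be an integer, n = 2^m − 1, and let β be a primitive element of F_{2^m}. Then the cyclic code of length 2n over F_2 with generator polynomial (x−1) m_β(x)^2 m_{β^3}(x) has dimension 2(2^m − 1) − 3m − 1 and minimum distance exactly 6. -/

import Mathlib

open Polynomial

/-- The cyclic code of length `N` over the field `F` generated by the polynomial `g`.
Codewords are identified with the representatives of degree `< N` of the elements of the
ideal generated by `g` in `F[x]/(x^N - 1)`; equivalently, a polynomial `c` of degree `< N`
is a codeword iff `c ∈ (g, x^N - 1)` as an ideal of `F[x]`. -/
noncomputable def cyclicCode (F : Type*) [Field F] (N : ℕ) (g : Polynomial F) :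
    Submodule F (Polynomial F) :=
  Polynomial.degreeLT F N ⊓
    Submodule.restrictScalars F (Ideal.span ({g, Polynomial.X ^ N - 1} : Set (Polynomial F)))

/-- The minimum distance (equivalently, the minimum Hamming weight of a nonzero codeword,
a codeword being identified with its coefficient vector) of a linear code of polynomials. -/
noncomputable def minDist {F : Type*} [Field F] (C : Submodule F (Polynomial F)) : ℕ :=
  sInf {w | ∃ c ∈ C, c ≠ 0 ∧ c.support.card = w}


section mainaux

variable {K : Type*} [Field K] [Fintype K] [Algebra (ZMod 2) K]

variable {K : Type*} [Field K] [Fintype K] [Algebra (ZMod 2) K]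

omit [Fintype K] in
lemma charK : CharP K 2 := charP_of_injective_algebraMap (algebraMap (ZMod 2) K).injective 2

omit [Fintype K] in
lemma frob_aeval (p : Polynomial (ZMod 2)) (γ : K) : aeval (γ ^ 2) p = (aeval γ p) ^ 2 := by
  have := charK (K := K)
  have h := Polynomial.hom_eval₂ p (algebraMap (ZMod 2) K) (frobenius K 2) γ
  simp only [frobenius_def] at h
  rw [aeval_def, aeval_def, h,
    show ((frobenius K 2).comp (algebraMap (ZMod 2) K)) = algebraMap (ZMod 2) K from
      Subsingleton.elim _ _]

lemma support_sum_X_pow (s : Finset ℕ) : (∑ i ∈ s, (X : (ZMod 2)[X]) ^ i).support = s := by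
  ext k
  simp only [Polynomial.mem_support_iff, Polynomial.finset_sum_coeff, coeff_X_pow]
  rw [Finset.sum_ite_eq s k (fun _ => (1 : ZMod 2))]
  split <;> simp_all

omit [Fintype K] in
lemma aeval_eq_sum_support (p : Polynomial (ZMod 2)) (x : K) :
    aeval x p = ∑ j ∈ p.support, x ^ j := by
  rw [aeval_def, Polynomial.eval₂_eq_sum, Polynomial.sum]
  refine Finset.sum_congr rfl fun j hj => ?_
  have h1 : ∀ a : ZMod 2, a ≠ 0 → a = 1 := by decide
  rw [h1 _ (Polynomial.mem_support_iff.mp hj), map_one, one_mul]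

lemma vandermonde_ne {t : ℕ} (ht : 0 < t) (v : Fin t → K) (hv : Function.Injective v) :
    ∃ k : Fin t, ∑ i, v i ^ (k : ℕ) ≠ 0 := by
  by_contra h
  push_neg at h
  have := Matrix.eq_zero_of_forall_pow_sum_mul_pow_eq_zero (f := v) (v := fun _ => (1 : K)) hv
    (by intro i; simpa using h i)
  have := congrFun this ⟨0, ht⟩
  simpa using this


open IntermediateField in
lemma minpoly_deg (m : ℕ) (hK : Fintype.card K = 2 ^ m) (γ : K) (hγ : γ ≠ 0) :
    ∃ d, d ∣ m ∧ 0 < d ∧ (minpoly (ZMod 2) γ).natDegree = d ∧ orderOf γ ∣ 2 ^ d - 1 := by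
  have hfd : FiniteDimensional (ZMod 2) K := Module.finite_iff_finite.mpr inferInstance
  have hrm : Module.finrank (ZMod 2) K = m := by
    have h := Module.card_eq_pow_finrank (K := ZMod 2) (V := K)
    rw [ZMod.card, hK] at h
    exact (Nat.pow_right_injective le_rfl h.symm)
  set L := (ZMod 2)⟮γ⟯ with hL
  have : Finite L := Subtype.finite
  have : Fintype L := Fintype.ofFinite L
  set d := Module.finrank (ZMod 2) L with hd
  have hdm : d ∣ m := ⟨Module.finrank L K, by rw [← hrm, ← Module.finrank_mul_finrank (ZMod 2) L K]⟩
  have hdpos : 0 < d := Module.finrank_pos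
  have hdeg : (minpoly (ZMod 2) γ).natDegree = d :=
    (IntermediateField.adjoin.finrank (IsIntegral.of_finite _ γ)).symm
  have hcardL : Fintype.card L = 2 ^ d := by
    have h := Module.card_eq_pow_finrank (K := ZMod 2) (V := L)
    rwa [ZMod.card] at h
  set γ' : L := IntermediateField.AdjoinSimple.gen (ZMod 2) γ with hγ'
  have hγ'0 : γ' ≠ 0 := by
    intro h
    exact hγ (by simpa [hγ'] using congrArg (algebraMap L K) h)
  have hord : orderOf γ' = orderOf γ := by
    conv_rhs => rw [← IntermediateField.AdjoinSimple.algebraMap_gen (ZMod 2) γ]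
    exact (orderOf_injective (algebraMap L K).toMonoidHom (algebraMap L K).injective γ').symm
  refine ⟨d, hdm, hdpos, hdeg, ?_⟩
  rw [← hord, ← hcardL]
  exact orderOf_dvd_of_pow_eq_one (FiniteField.pow_card_sub_one_eq_one γ' hγ'0)

lemma degβ (m : ℕ) (hm : 3 ≤ m) (hK : Fintype.card K = 2 ^ m)
    (β : K) (hβ : IsPrimitiveRoot β (2 ^ m - 1)) :
    (minpoly (ZMod 2) β).natDegree = m := by
  have h8 : (8 : ℕ) ≤ 2 ^ m := by calc (8:ℕ) = 2 ^ 3 := by norm_num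
                                      _ ≤ 2 ^ m := Nat.pow_le_pow_right (by norm_num) hm
  have hβ0 : β ≠ 0 := hβ.ne_zero (by omega)
  obtain ⟨d, hdm, hdpos, hdeg, hdvd⟩ := minpoly_deg m hK β hβ0
  have hord : orderOf β = 2 ^ m - 1 := hβ.eq_orderOf.symm
  rw [hord] at hdvd
  have h1d : 2 ≤ 2 ^ d := by calc (2:ℕ) = 2^1 := by norm_num
                                  _ ≤ 2 ^ d := Nat.pow_le_pow_right (by norm_num) hdpos
  have h1 : 2 ^ m - 1 ≤ 2 ^ d - 1 := Nat.le_of_dvd (by omega) hdvd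
  have h2 : 2 ^ m ≤ 2 ^ d := by
    have := Nat.one_le_two_pow (n := m); omega
  have hmd : m ≤ d := (Nat.pow_le_pow_iff_right (by norm_num)).mp h2
  have : d ≤ m := Nat.le_of_dvd (by omega) hdm
  omega

lemma degβ3 (m : ℕ) (hm : 3 ≤ m) (hK : Fintype.card K = 2 ^ m)
    (β : K) (hβ : IsPrimitiveRoot β (2 ^ m - 1)) :
    (minpoly (ZMod 2) (β ^ 3)).natDegree = m := by
  have h8 : (8 : ℕ) ≤ 2 ^ m := by calc (8:ℕ) = 2 ^ 3 := by norm_num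
                                      _ ≤ 2 ^ m := Nat.pow_le_pow_right (by norm_num) hm
  have hβ0 : β ≠ 0 := hβ.ne_zero (by omega)
  obtain ⟨d, hdm, hdpos, hdeg, hdvd⟩ := minpoly_deg m hK (β ^ 3) (pow_ne_zero 3 hβ0)
  rw [hdeg]
  by_contra hne
  have hdm' : d < m := lt_of_le_of_ne (Nat.le_of_dvd (by omega) hdm) hne
  have h2d : 2 * d ≤ m := by
    obtain ⟨k, hk⟩ := hdm
    rcases k with _ | _ | k
    · omega
    · omega
    · nlinarith
  have hordβ : orderOf β = 2 ^ m - 1 := hβ.eq_orderOf.symm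
  have hfin : IsOfFinOrder β := orderOf_pos_iff.mp (by omega)
  have hord : orderOf (β ^ 3) = (2 ^ m - 1) / Nat.gcd (2 ^ m - 1) 3 := by
    rw [hfin.orderOf_pow, hordβ]
  rw [hord] at hdvd
  have hgcd3 : Nat.gcd (2 ^ m - 1) 3 ≤ 3 := Nat.gcd_le_right _ (by norm_num)
  have hgcd0 : 0 < Nat.gcd (2 ^ m - 1) 3 := Nat.gcd_pos_of_pos_right _ (by norm_num)
  have hdiv3 : (2 ^ m - 1) / 3 ≤ (2 ^ m - 1) / Nat.gcd (2 ^ m - 1) 3 :=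
    Nat.div_le_div_left hgcd3 hgcd0
  have h1d : 1 ≤ 2 ^ d := Nat.one_le_two_pow
  have hd2 : 2 ≤ 2 ^ d := by calc (2:ℕ) = 2^1 := by norm_num
                                  _ ≤ 2 ^ d := Nat.pow_le_pow_right (by norm_num) hdpos
  have hle : (2 ^ m - 1) / Nat.gcd (2 ^ m - 1) 3 ≤ 2 ^ d - 1 :=
    Nat.le_of_dvd (by omega) hdvd
  have hdm3 : (2 ^ m - 1) / 3 ≤ 2 ^ d - 1 := le_trans hdiv3 hle
  have hmod := Nat.div_add_mod (2 ^ m - 1) 3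
  have hmodlt : (2 ^ m - 1) % 3 < 3 := Nat.mod_lt _ (by norm_num)
  have hlt : 2 ^ m ≤ 3 * 2 ^ d := by omega
  have hsq : 2 ^ d * 2 ^ d ≤ 2 ^ m := by
    rw [← pow_add]
    exact Nat.pow_le_pow_right (by norm_num) (by omega)
  have hX3 : 2 ^ d ≤ 3 := Nat.le_of_mul_le_mul_right (by nlinarith) (by omega)
  have hd1 : d = 1 := by
    rcases d with _ | _ | d
    · omega
    · rfl
    · have : 2 ^ 2 ≤ 2 ^ (d + 2) := Nat.pow_le_pow_right (by norm_num) (by omega)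
      norm_num at this; omega
  subst hd1
  norm_num at hlt
  omega

lemma p2_ne_p3 (m : ℕ) (hm : 3 ≤ m) (hK : Fintype.card K = 2 ^ m)
    (β : K) (hβ : IsPrimitiveRoot β (2 ^ m - 1)) :
    minpoly (ZMod 2) β ≠ minpoly (ZMod 2) (β ^ 3) := by
  have h8 : (8 : ℕ) ≤ 2 ^ m := by calc (8:ℕ) = 2 ^ 3 := by norm_num
                                      _ ≤ 2 ^ m := Nat.pow_le_pow_right (by norm_num) hm
  have : Module.Finite (ZMod 2) K := Module.finite_iff_finite.mpr inferInstance
  have hint : IsIntegral (ZMod 2) β := IsIntegral.of_finite _ _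
  classical
  intro h
  set p2 := minpoly (ZMod 2) β with hp2
  -- all β^(2^i) are roots
  have hroots : ∀ i : ℕ, aeval (β ^ 2 ^ i) p2 = 0 := by
    intro i
    induction i with
    | zero => rw [pow_zero, pow_one]; exact minpoly.aeval _ _
    | succ i ih =>
      rw [pow_succ, pow_mul, frob_aeval, ih, zero_pow (by norm_num)]
  have hroot3 : aeval (β ^ 3) p2 = 0 := by rw [h]; exact minpoly.aeval _ _
  -- collect m+1 distinct roots
  have hpinj : ∀ i j : ℕ, i < 2 ^ m - 1 → j < 2 ^ m - 1 → β ^ i = β ^ j → i = j := by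
    intro i j hi hj hij
    exact hβ.pow_inj hi hj hij
  have h2i : ∀ i, i < m → 2 ^ i < 2 ^ m - 1 := by
    intro i hi
    have : 2 ^ (i+1) ≤ 2 ^ m := Nat.pow_le_pow_right (by norm_num) (by omega)
    have h1 : 1 ≤ 2 ^ i := Nat.one_le_two_pow
    rw [pow_succ] at this
    omega
  set S : Finset K := insert (β ^ 3) ((Finset.range m).image fun i => β ^ 2 ^ i) with hS
  have hcardim : ((Finset.range m).image fun i => β ^ 2 ^ i).card = m := by
    rw [Finset.card_image_of_injOn, Finset.card_range]
    intro i hi j hj hij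
    simp only [Finset.mem_coe, Finset.mem_range] at hi hj
    have := hpinj _ _ (h2i i hi) (h2i j hj) hij
    exact Nat.pow_right_injective le_rfl this
  have hnotmem : β ^ 3 ∉ (Finset.range m).image fun i => β ^ 2 ^ i := by
    simp only [Finset.mem_image, Finset.mem_range, not_exists]
    rintro i ⟨hi, hij⟩
    have h3 : (3:ℕ) < 2 ^ m - 1 := by omega
    have := hpinj _ _ (h2i i hi) h3 hij
    rcases i with _ | _ | i
    · simp at this
    · simp at this
    · rw [pow_succ, pow_succ] at this
      omega
  have hcardS : S.card = m + 1 := by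
    rw [hS, Finset.card_insert_of_notMem hnotmem, hcardim]
  -- S consists of roots of p2.map
  have hp20 : p2 ≠ 0 := minpoly.ne_zero hint
  have hmapne : p2.map (algebraMap (ZMod 2) K) ≠ 0 :=
    (Polynomial.map_ne_zero_iff (algebraMap (ZMod 2) K).injective).mpr hp20
  have hsub : S ⊆ (p2.map (algebraMap (ZMod 2) K)).roots.toFinset := by
    intro x hx
    rw [Multiset.mem_toFinset, Polynomial.mem_roots hmapne, Polynomial.IsRoot, Polynomial.eval_map,
      ← Polynomial.aeval_def]
    rw [hS, Finset.mem_insert] at hx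
    rcases hx with rfl | hx
    · exact hroot3
    · obtain ⟨i, _, rfl⟩ := Finset.mem_image.mp hx
      exact hroots i
  have hle : S.card ≤ p2.natDegree := by
    calc S.card ≤ (p2.map (algebraMap (ZMod 2) K)).roots.toFinset.card := Finset.card_le_card hsub
      _ ≤ Multiset.card (p2.map (algebraMap (ZMod 2) K)).roots := Multiset.toFinset_card_le _
      _ ≤ (p2.map (algebraMap (ZMod 2) K)).natDegree := Polynomial.card_roots' _
      _ = p2.natDegree := Polynomial.natDegree_map _
  rw [hcardS, degβ m hm hK β hβ] at hle
  omega

lemma coprime_of_ne {p q : Polynomial (ZMod 2)} (hp : p.Monic) (hq : q.Monic)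
    (hpi : Irreducible p) (hqi : Irreducible q) (hne : p ≠ q) : IsCoprime p q :=
  hpi.coprime_iff_not_dvd.mpr fun hdvd =>
    hne (Polynomial.eq_of_monic_of_associated hp hq (hpi.associated_of_dvd hqi hdvd))

lemma prod_dvd (m : ℕ) (hm : 3 ≤ m) (hK : Fintype.card K = 2 ^ m)
    (β : K) (hβ : IsPrimitiveRoot β (2 ^ m - 1)) :
    ((X - 1) * minpoly (ZMod 2) β * minpoly (ZMod 2) (β ^ 3)) ∣
      (X : (ZMod 2)[X]) ^ (2 ^ m - 1) - 1 := by
  have : Module.Finite (ZMod 2) K := Module.finite_iff_finite.mpr inferInstance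
  have hint2 : IsIntegral (ZMod 2) β := IsIntegral.of_finite _ _
  have hint3 : IsIntegral (ZMod 2) (β ^ 3) := IsIntegral.of_finite _ _
  have hX1 : (X - 1 : (ZMod 2)[X]) = X - C 1 := by rw [map_one]
  have h1 : (X - 1 : (ZMod 2)[X]) ∣ X ^ (2 ^ m - 1) - 1 := by
    rw [hX1, dvd_iff_isRoot]
    simp [IsRoot]
  have h2 : minpoly (ZMod 2) β ∣ X ^ (2 ^ m - 1) - 1 :=
    minpoly.dvd _ _ (by rw [map_sub, map_pow, aeval_X, map_one, hβ.pow_eq_one, sub_self])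
  have h3 : minpoly (ZMod 2) (β ^ 3) ∣ X ^ (2 ^ m - 1) - 1 := by
    refine minpoly.dvd _ _ ?_
    rw [map_sub, map_pow, aeval_X, map_one, ← pow_mul, mul_comm, pow_mul, hβ.pow_eq_one,
      one_pow, sub_self]
  have hm2 : (minpoly (ZMod 2) β).Monic := minpoly.monic hint2
  have hm3 : (minpoly (ZMod 2) (β ^ 3)).Monic := minpoly.monic hint3
  have hi2 : Irreducible (minpoly (ZMod 2) β) := minpoly.irreducible hint2
  have hi3 : Irreducible (minpoly (ZMod 2) (β ^ 3)) := minpoly.irreducible hint3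
  have hm1 : (X - 1 : (ZMod 2)[X]).Monic := by rw [hX1]; exact monic_X_sub_C 1
  have hi1 : Irreducible (X - 1 : (ZMod 2)[X]) := by rw [hX1]; exact irreducible_X_sub_C 1
  have hne12 : (X - 1 : (ZMod 2)[X]) ≠ minpoly (ZMod 2) β := by
    intro h
    have := congrArg natDegree h
    rw [hX1, natDegree_X_sub_C, degβ m hm hK β hβ] at this
    omega
  have hne13 : (X - 1 : (ZMod 2)[X]) ≠ minpoly (ZMod 2) (β ^ 3) := by
    intro h
    have := congrArg natDegree h
    rw [hX1, natDegree_X_sub_C, degβ3 m hm hK β hβ] at this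
    omega
  have c12 : IsCoprime (X - 1 : (ZMod 2)[X]) (minpoly (ZMod 2) β) :=
    coprime_of_ne hm1 hm2 hi1 hi2 hne12
  have c13 : IsCoprime (X - 1 : (ZMod 2)[X]) (minpoly (ZMod 2) (β ^ 3)) :=
    coprime_of_ne hm1 hm3 hi1 hi3 hne13
  have c23 : IsCoprime (minpoly (ZMod 2) β) (minpoly (ZMod 2) (β ^ 3)) :=
    coprime_of_ne hm2 hm3 hi2 hi3 (p2_ne_p3 m hm hK β hβ)
  exact (c13.mul_left c23).mul_dvd (c12.mul_dvd h1 h2) h3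

lemma sq_pow (N : ℕ) : ((X : (ZMod 2)[X]) ^ N - 1) ^ 2 = X ^ (2 * N) - 1 := by
  rw [CharTwo.sub_eq_add, CharTwo.sub_eq_add, CharTwo.add_sq, one_pow, ← pow_mul, mul_comm]

lemma gdvd (m : ℕ) (hm : 3 ≤ m) (hK : Fintype.card K = 2 ^ m)
    (β : K) (hβ : IsPrimitiveRoot β (2 ^ m - 1)) :
    ((X - 1) * (minpoly (ZMod 2) β) ^ 2 * minpoly (ZMod 2) (β ^ 3)) ∣
      (X : (ZMod 2)[X]) ^ (2 * (2 ^ m - 1)) - 1 := by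
  obtain ⟨u, hu⟩ := prod_dvd m hm hK β hβ
  refine ⟨(X - 1) * minpoly (ZMod 2) (β ^ 3) * u ^ 2, ?_⟩
  rw [← sq_pow, hu]
  ring

section Fgen
variable {F : Type*} [Field F]

lemma mem_cyclicCode {N : ℕ} {g : Polynomial F} (hdvd : g ∣ (X : Polynomial F) ^ N - 1)
    {c : Polynomial F} :
    c ∈ cyclicCode F N g ↔ c.degree < N ∧ g ∣ c := by
  have hspan : Ideal.span ({g, (X : Polynomial F) ^ N - 1} : Set (Polynomial F)) =
      Ideal.span {g} := by
    apply le_antisymm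
    · rw [Ideal.span_le]
      rintro x hx
      simp only [Set.mem_insert_iff, Set.mem_singleton_iff] at hx
      rcases hx with rfl | rfl
      · exact Ideal.subset_span rfl
      · exact Ideal.mem_span_singleton.mpr hdvd
    · exact Ideal.span_mono (by simp)
  unfold cyclicCode
  rw [Submodule.mem_inf, Polynomial.mem_degreeLT]
  constructor
  · rintro ⟨h1, h2⟩
    refine ⟨h1, ?_⟩
    rw [Submodule.restrictScalars_mem, hspan, Ideal.mem_span_singleton] at h2
    exact h2
  · rintro ⟨h1, h2⟩
    exact ⟨h1, by rw [Submodule.restrictScalars_mem, hspan, Ideal.mem_span_singleton]; exact h2⟩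

lemma finrank_cyclicCode {N : ℕ} {g : Polynomial F} (hg : g.Monic)
    (hdvd : g ∣ (X : Polynomial F) ^ N - 1) (hkN : g.natDegree ≤ N) :
    Module.finrank F (cyclicCode F N g) = N - g.natDegree := by
  have hg0 : g ≠ 0 := hg.ne_zero
  set k := g.natDegree with hk
  set f := (LinearMap.mulLeft F g).comp (Submodule.subtype (degreeLT F (N - k))) with hf
  have hinj : Function.Injective f := by
    intro a b hab
    exact Subtype.ext (mul_right_injective₀ hg0 hab)
  have hrange : LinearMap.range f = cyclicCode F N g := by
    ext c
    constructor
    · rintro ⟨⟨p, hp⟩, rfl⟩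
      have hgp : f ⟨p, hp⟩ = g * p := rfl
      rw [hgp, mem_cyclicCode hdvd]
      refine ⟨?_, Dvd.intro p rfl⟩
      rcases eq_or_ne p 0 with rfl | hp0
      · simp only [mul_zero, Polynomial.degree_zero, Nat.cast_withBot]; exact WithBot.bot_lt_coe N
      · rw [← Polynomial.natDegree_lt_iff_degree_lt (mul_ne_zero hg0 hp0),
          Polynomial.natDegree_mul hg0 hp0]
        have := (Polynomial.natDegree_lt_iff_degree_lt hp0).mpr (Polynomial.mem_degreeLT.mp hp)
        omega
    · intro hc
      rw [mem_cyclicCode hdvd] at hc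
      obtain ⟨hdeg, p, rfl⟩ := hc
      refine ⟨⟨p, ?_⟩, rfl⟩
      rw [Polynomial.mem_degreeLT]
      rcases eq_or_ne p 0 with rfl | hp0
      · simp only [Polynomial.degree_zero, Nat.cast_withBot]; exact WithBot.bot_lt_coe (N - k)
      · rw [← Polynomial.natDegree_lt_iff_degree_lt hp0]
        rw [← Polynomial.natDegree_lt_iff_degree_lt (mul_ne_zero hg0 hp0),
          Polynomial.natDegree_mul hg0 hp0] at hdeg
        omega
  rw [← hrange, LinearMap.finrank_range_of_inj hinj]
  rw [(Polynomial.degreeLTEquiv F (N - k)).finrank_eq]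
  simp [Module.finrank_pi]

end Fgen

noncomputable def qpoly (c : Polynomial (ZMod 2)) (n : ℕ) : Polynomial (ZMod 2) :=
  ∑ j ∈ Finset.range n, C (c.coeff (n + j)) * X ^ j

lemma qpoly_coeff (c : Polynomial (ZMod 2)) (n k : ℕ) :
    (qpoly c n).coeff k = if k < n then c.coeff (n + k) else 0 := by
  unfold qpoly
  rw [Polynomial.finset_sum_coeff]
  simp only [Polynomial.coeff_C_mul, Polynomial.coeff_X_pow]
  rw [Finset.sum_congr rfl (fun j _ => by rw [mul_ite, mul_one, mul_zero])]
  rw [Finset.sum_ite_eq (Finset.range n) k (fun j => c.coeff (n + j))]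
  simp [Finset.mem_range]

lemma mulXn_coeff (q : Polynomial (ZMod 2)) (n k : ℕ) :
    (((X : Polynomial (ZMod 2)) ^ n - 1) * q).coeff k
      = (if n ≤ k then q.coeff (k - n) else 0) - q.coeff k := by
  have : ((X : Polynomial (ZMod 2)) ^ n - 1) * q = q * X ^ n - q := by ring
  rw [this, Polynomial.coeff_sub, Polynomial.coeff_mul_X_pow']

lemma rpoly_coeff (c : Polynomial (ZMod 2)) (n : ℕ) (hc : c.degree < (2 * n : ℕ)) (k : ℕ) :
    (c - ((X : Polynomial (ZMod 2)) ^ n - 1) * qpoly c n).coeff k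
      = if k < n then c.coeff k + c.coeff (n + k) else 0 := by
  rw [Polynomial.coeff_sub, mulXn_coeff, qpoly_coeff, qpoly_coeff]
  rcases lt_or_ge k n with h | h
  · simp only [if_pos h, if_neg (by omega : ¬ n ≤ k)]
    ring
  · simp only [if_neg (by omega : ¬ k < n), if_pos h]
    rcases lt_or_ge (k - n) n with h2 | h2
    · simp only [if_pos h2]
      rw [show n + (k - n) = k by omega]
      ring
    · simp only [if_neg (by omega : ¬ k - n < n)]
      have hk2 : (2 * n : ℕ) ≤ k := by omega
      rw [Polynomial.coeff_eq_zero_of_degree_lt (hc.trans_le (by exact_mod_cast hk2))]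
      ring

lemma lower_bound (m : ℕ) (hm : 3 ≤ m) (hK : Fintype.card K = 2 ^ m)
    (β : K) (hβ : IsPrimitiveRoot β (2 ^ m - 1))
    (c : Polynomial (ZMod 2)) (hc0 : c ≠ 0)
    (hcdeg : c.degree < ((2 * (2 ^ m - 1) : ℕ) : WithBot ℕ))
    (hcdvd : ((X - 1) * (minpoly (ZMod 2) β) ^ 2 * minpoly (ZMod 2) (β ^ 3)) ∣ c) :
    6 ≤ c.support.card := by
  classical
  have := charK (K := K)
  set n := 2 ^ m - 1 with hn
  have h8 : (8 : ℕ) ≤ 2 ^ m := by calc (8:ℕ) = 2 ^ 3 := by norm_num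
                                      _ ≤ 2 ^ m := Nat.pow_le_pow_right (by norm_num) hm
  have hn7 : 7 ≤ n := by omega
  have hβ0 : β ≠ 0 := hβ.ne_zero (by omega)
  have hβn : β ^ n = 1 := hβ.pow_eq_one
  -- the two evaluation facts for c
  obtain ⟨t, hct⟩ := hcdvd
  have hev : ∀ x : K, x = 1 ∨ x = β ∨ x = β ^ 3 → aeval x c = 0 := by
    rintro x hx
    rcases hx with rfl | rfl | rfl
    · rw [hct]; simp
    · rw [hct]; simp [minpoly.aeval]
    · rw [hct]; simp [minpoly.aeval]
  -- derivative fact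
  have hev' : aeval β (derivative c) = 0 := by
    have hc2 : c = (minpoly (ZMod 2) β) ^ 2 * ((X - 1) * minpoly (ZMod 2) (β ^ 3) * t) := by
      rw [hct]; ring
    rw [hc2, derivative_mul, derivative_pow]
    simp only [Nat.cast_ofNat, map_mul, map_add, map_pow, minpoly.aeval]
    norm_num
  set q := qpoly c n with hq
  set r := c - ((X : Polynomial (ZMod 2)) ^ n - 1) * q with hr
  have hrc : ∀ k, r.coeff k = if k < n then c.coeff k + c.coeff (n + k) else 0 :=
    rpoly_coeff c n hcdeg
  have hqc : ∀ k, q.coeff k = if k < n then c.coeff (n + k) else 0 := qpoly_coeff c n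
  have hqsupp : ∀ k ∈ q.support, k < n := by
    intro k hk
    rw [Polynomial.mem_support_iff, hqc k] at hk
    by_contra h
    simp [if_neg h] at hk
  rcases eq_or_ne r 0 with hr0 | hr0
  · -- c = (X^n-1) * q
    rw [hr] at hr0
    have hcq : c = ((X : Polynomial (ZMod 2)) ^ n - 1) * q := sub_eq_zero.mp hr0
    have hq0 : q ≠ 0 := by
      intro h
      rw [h, mul_zero] at hcq
      exact hc0 hcq
    -- aeval β q = 0 via the derivative
    have hder : aeval β q = 0 := by
      have hn2 : C ((n : ℕ) : ZMod 2) = (1 : Polynomial (ZMod 2)) := by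
        have h2 : (2:ℕ) ∣ 2 ^ m := dvd_pow_self 2 (by omega)
        have hmod : n % 2 = 1 := by omega
        rw [← ZMod.natCast_mod, hmod, Nat.cast_one, map_one]
      have h1 : derivative c = X ^ (n - 1) * q + (X ^ n - 1) * derivative q := by
        rw [hcq, derivative_mul, derivative_sub, derivative_one, derivative_X_pow, sub_zero,
          hn2, one_mul]
      have h2 := hev'
      rw [h1, map_add, map_mul, map_mul, map_sub, map_pow, map_pow, aeval_X, map_one, hβn,
        sub_self, zero_mul, add_zero] at h2
      rcases mul_eq_zero.mp h2 with h3 | h3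
      · exact absurd h3 (pow_ne_zero _ hβ0)
      · exact h3
    -- weight of q is at least 3
    have hwq : 3 ≤ q.support.card := by
      by_contra hlt
      push_neg at hlt
      have hsum : ∑ j ∈ q.support, β ^ j = 0 := by
        rw [← aeval_eq_sum_support]; exact hder
      have hcases : q.support.card = 0 ∨ q.support.card = 1 ∨ q.support.card = 2 := by omega
      rcases hcases with h | h | h
      · exact hq0 (Polynomial.support_eq_empty.mp (Finset.card_eq_zero.mp h))
      · obtain ⟨a, ha⟩ := Finset.card_eq_one.mp h
        rw [ha, Finset.sum_singleton] at hsum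
        exact pow_ne_zero _ hβ0 hsum
      · obtain ⟨a, b, hab, hs⟩ := Finset.card_eq_two.mp h
        rw [hs, Finset.sum_pair hab] at hsum
        have hev : β ^ a = β ^ b := by
          rw [eq_neg_of_add_eq_zero_left hsum, CharTwo.neg_eq]
        have ha' : a < n := hqsupp a (by rw [hs]; simp)
        have hb' : b < n := hqsupp b (by rw [hs]; simp)
        exact hab (hβ.pow_inj ha' hb' hev)
    -- weight of c is 2 * weight of q
    have hsub : q.support ∪ q.support.image (fun j => n + j) ⊆ c.support := by
      intro k hk
      rw [Finset.mem_union] at hk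
      rw [Polynomial.mem_support_iff]
      rcases hk with hk | hk
      · have hkn : k < n := hqsupp k hk
        rw [hcq, mulXn_coeff, if_neg (by omega), zero_sub, neg_ne_zero]
        exact Polynomial.mem_support_iff.mp hk
      · obtain ⟨j, hj, rfl⟩ := Finset.mem_image.mp hk
        have hjn : j < n := hqsupp j hj
        rw [hcq, mulXn_coeff, if_pos (by omega), show n + j - n = j by omega,
          hqc (n + j), if_neg (by omega), sub_zero]
        exact Polynomial.mem_support_iff.mp hj
    have hdisj : Disjoint q.support (q.support.image (fun j => n + j)) := by
      rw [Finset.disjoint_left]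
      intro a ha hb
      obtain ⟨j, hj, hje⟩ := Finset.mem_image.mp hb
      have := hqsupp a ha
      omega
    have himg : (q.support.image (fun j => n + j)).card = q.support.card :=
      Finset.card_image_of_injective _ fun a b h => by omega
    calc (6 : ℕ) ≤ q.support.card + (q.support.image (fun j => n + j)).card := by omega
      _ = (q.support ∪ q.support.image (fun j => n + j)).card :=
          (Finset.card_union_of_disjoint hdisj).symm
      _ ≤ c.support.card := Finset.card_le_card hsub
  · -- r ≠ 0 case
    by_contra h6
    push_neg at h6
    have hrsupp : ∀ k ∈ r.support, k < n := by
      intro k hk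
      rw [Polynomial.mem_support_iff, hrc k] at hk
      by_contra h
      simp [if_neg h] at hk
    -- weight of r ≤ weight of c
    have hwrc : r.support.card ≤ c.support.card := by
      apply Finset.card_le_card_of_injOn (fun j => if c.coeff j ≠ 0 then j else n + j)
      · intro j hj
        have hjn : j < n := hrsupp j hj
        have hrj := Polynomial.mem_support_iff.mp hj
        rw [hrc j, if_pos hjn] at hrj
        by_cases hcj : c.coeff j ≠ 0
        · simp only [if_pos hcj]
          exact Polynomial.mem_support_iff.mpr hcj
        · simp only [if_neg hcj]
          push_neg at hcj
          rw [hcj, zero_add] at hrj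
          exact Polynomial.mem_support_iff.mpr hrj
      · intro a ha b hb hab
        simp only at hab
        have han : a < n := hrsupp a (Finset.mem_coe.mp ha)
        have hbn : b < n := hrsupp b (Finset.mem_coe.mp hb)
        split_ifs at hab <;> omega
    -- r vanishes at β^k for k ≤ 4
    have hevr : ∀ k : ℕ, k ≤ 4 → aeval (β ^ k) r = 0 := by
      have hbase : ∀ x : K, x = 1 ∨ x = β ∨ x = β ^ 3 → aeval x r = 0 := by
        rintro x hx
        have hxn : x ^ n = 1 := by
          rcases hx with rfl | rfl | rfl
          · rw [one_pow]
          · exact hβn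
          · rw [← pow_mul, mul_comm, pow_mul, hβn, one_pow]
        rw [hr, map_sub, map_mul, map_sub, map_pow, aeval_X, map_one, hxn, sub_self, zero_mul,
          sub_zero]
        exact hev x hx
      intro k hk
      interval_cases k
      · rw [pow_zero]; exact hbase 1 (Or.inl rfl)
      · rw [pow_one]; exact hbase β (Or.inr (Or.inl rfl))
      · rw [frob_aeval r β, hbase β (Or.inr (Or.inl rfl)), zero_pow (by norm_num)]
      · exact hbase (β ^ 3) (Or.inr (Or.inr rfl))
      · rw [show (β:K) ^ 4 = (β ^ 2) ^ 2 by ring, frob_aeval r (β ^ 2), frob_aeval r β,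
          hbase β (Or.inr (Or.inl rfl)), zero_pow (by norm_num), zero_pow (by norm_num)]
    -- Vandermonde contradiction
    set s := r.support with hs
    have ht0 : 0 < s.card := Finset.card_pos.mpr (Polynomial.nonempty_support_iff.mpr hr0)
    have ht5 : s.card ≤ 5 := by
      have := hwrc; omega
    set v : Fin s.card → K := fun i => β ^ ((s.equivFin.symm i : ℕ)) with hv
    have hvinj : Function.Injective v := by
      intro i j hij
      have hi : ((s.equivFin.symm i : ℕ)) < n := hrsupp _ (s.equivFin.symm i).2
      have hj : ((s.equivFin.symm j : ℕ)) < n := hrsupp _ (s.equivFin.symm j).2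
      have := hβ.pow_inj hi hj hij
      exact s.equivFin.symm.injective (Subtype.ext this)
    obtain ⟨k, hk⟩ := vandermonde_ne ht0 v hvinj
    apply hk
    have hsum : ∑ i, v i ^ (k : ℕ) = ∑ j ∈ s, (β ^ (k : ℕ)) ^ j := by
      rw [← Finset.sum_coe_sort s (fun j => (β ^ (k : ℕ)) ^ (j : ℕ))]
      rw [← Equiv.sum_comp s.equivFin.symm (fun x => (β ^ (k : ℕ)) ^ (x : ℕ))]
      refine Finset.sum_congr rfl fun i _ => ?_
      rw [hv, ← pow_mul, ← pow_mul, mul_comm]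
    rw [hsum, ← aeval_eq_sum_support]
    exact hevr (k : ℕ) (by omega)

lemma exists_wt6 (m : ℕ) (hm : 3 ≤ m) (hK : Fintype.card K = 2 ^ m)
    (β : K) (hβ : IsPrimitiveRoot β (2 ^ m - 1)) :
    ∃ c : Polynomial (ZMod 2), c.degree < ((2 * (2 ^ m - 1) : ℕ) : WithBot ℕ) ∧
      ((X - 1) * (minpoly (ZMod 2) β) ^ 2 * minpoly (ZMod 2) (β ^ 3)) ∣ c ∧
      c ≠ 0 ∧ c.support.card = 6 := by
  classical
  have := charK (K := K)
  set n := 2 ^ m - 1 with hn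
  have h8 : (8 : ℕ) ≤ 2 ^ m := by calc (8:ℕ) = 2 ^ 3 := by norm_num
                                      _ ≤ 2 ^ m := Nat.pow_le_pow_right (by norm_num) hm
  have hn7 : 7 ≤ n := by omega
  have hβ0 : β ≠ 0 := hβ.ne_zero (by omega)
  have hβn : β ^ n = 1 := hβ.pow_eq_one
  have hβ1 : β ≠ 1 := by
    intro h
    have := hβ.eq_orderOf
    rw [h, orderOf_one] at this
    omega
  have h1β : (1 : K) + β ≠ 0 := by
    intro h
    have : β = -1 := eq_neg_of_add_eq_zero_right h
    rw [CharTwo.neg_eq] at this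
    exact hβ1 this
  -- find b with β ^ b = 1 + β
  obtain ⟨b, hbn, hbe⟩ : ∃ b, b < n ∧ β ^ b = 1 + β := by
    set T : Finset K := (Finset.range n).image (β ^ ·) with hT
    have hTcard : T.card = n := by
      rw [hT, Finset.card_image_of_injOn, Finset.card_range]
      intro i hi j hj hij
      exact hβ.pow_inj (Finset.mem_range.mp hi) (Finset.mem_range.mp hj) hij
    have hTsub : T ⊆ Finset.univ.erase 0 := by
      intro x hx
      obtain ⟨i, _, rfl⟩ := Finset.mem_image.mp hx
      exact Finset.mem_erase.mpr ⟨pow_ne_zero _ hβ0, Finset.mem_univ _⟩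
    have hecard : (Finset.univ.erase (0 : K)).card = n := by
      rw [Finset.card_erase_of_mem (Finset.mem_univ _), Finset.card_univ, hK]
    have hTeq : T = Finset.univ.erase 0 :=
      Finset.eq_of_subset_of_card_le hTsub (by omega)
    have : (1 + β) ∈ T := by
      rw [hTeq]
      exact Finset.mem_erase.mpr ⟨h1β, Finset.mem_univ _⟩
    obtain ⟨b, hb, hbe⟩ := Finset.mem_image.mp this
    exact ⟨b, Finset.mem_range.mp hb, hbe⟩
  have hb0 : b ≠ 0 := by
    intro h
    rw [h, pow_zero] at hbe
    exact hβ0 (by linear_combination -hbe)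
  have hb1 : b ≠ 1 := by
    intro h
    rw [h, pow_one] at hbe
    exact one_ne_zero (α := K) (by linear_combination -hbe)
  have hb2 : 2 ≤ b := by omega
  -- the codeword
  set S6 : Finset ℕ := {0, 1, b, n, n + 1, n + b} with hS6
  set c : Polynomial (ZMod 2) := ∑ i ∈ S6, X ^ i with hc
  have hsupp : c.support = S6 := support_sum_X_pow S6
  have hm0 : (0:ℕ) ∉ ({1, b, n, n+1, n+b} : Finset ℕ) := by
    simp only [Finset.mem_insert, Finset.mem_singleton]; omega
  have hm1 : (1:ℕ) ∉ ({b, n, n+1, n+b} : Finset ℕ) := by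
    simp only [Finset.mem_insert, Finset.mem_singleton]; omega
  have hmb : b ∉ ({n, n+1, n+b} : Finset ℕ) := by
    simp only [Finset.mem_insert, Finset.mem_singleton]; omega
  have hmn : n ∉ ({n+1, n+b} : Finset ℕ) := by
    simp only [Finset.mem_insert, Finset.mem_singleton]; omega
  have hmn1 : n+1 ∉ ({n+b} : Finset ℕ) := by
    simp only [Finset.mem_singleton]; omega
  have hcard : S6.card = 6 := by
    rw [hS6, Finset.card_insert_of_notMem hm0, Finset.card_insert_of_notMem hm1,
      Finset.card_insert_of_notMem hmb, Finset.card_insert_of_notMem hmn,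
      Finset.card_insert_of_notMem hmn1, Finset.card_singleton]
  have hceq : c = ((X : Polynomial (ZMod 2)) ^ n - 1) * (X ^ b + X + 1) := by
    rw [hc, hS6, Finset.sum_insert hm0, Finset.sum_insert hm1, Finset.sum_insert hmb,
      Finset.sum_insert hmn, Finset.sum_insert hmn1, Finset.sum_singleton]
    have h2 : (2 : Polynomial (ZMod 2)) = 0 := CharTwo.two_eq_zero
    rw [pow_add, pow_add]
    linear_combination (X ^ b + X + 1 : Polynomial (ZMod 2)) * h2
  have hc0 : c ≠ 0 := by
    intro h
    rw [← hsupp, h] at hcard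
    simp at hcard
  refine ⟨c, ?_, ?_, hc0, by rw [hsupp, hcard]⟩
  · rw [Polynomial.degree_lt_iff_coeff_zero]
    intro k hk
    have hk' : 2 * n ≤ k := by exact_mod_cast hk
    have : k ∉ c.support := by
      rw [hsupp, hS6]
      simp only [Finset.mem_insert, Finset.mem_singleton]
      omega
    exact Polynomial.notMem_support_iff.mp this
  · obtain ⟨u, hu⟩ := prod_dvd m hm hK β hβ
    have hp2 : minpoly (ZMod 2) β ∣ X ^ b + X + 1 := by
      apply minpoly.dvd
      rw [map_add, map_add, map_pow, aeval_X, map_one, hbe]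
      rw [show (1:K) + β + β + 1 = (1 + β) + (1 + β) by ring, CharTwo.add_self_eq_zero]
    obtain ⟨w, hw⟩ := hp2
    refine ⟨u * w, ?_⟩
    rw [hceq, hu, hw]
    ring


lemma deg_le_len (m : ℕ) (hm : 3 ≤ m) : 3 * m + 1 ≤ 2 * (2 ^ m - 1) := by
  induction m, hm using Nat.le_induction with
  | base => norm_num
  | succ k hk ih =>
    have h8 : (2:ℕ) ^ 3 ≤ 2 ^ k := Nat.pow_le_pow_right (by norm_num) hk
    rw [pow_succ]
    norm_num at h8 ⊢
    omega

end mainaux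

/-- for `m ≥ 3`, `n = 2^m - 1` and `β` a primitive element of `F_{2^m}`,
the repeated-root binary cyclic code of length `2n` with generator polynomial
`(x-1) m_β(x)^2 m_{β³}(x)` has dimension `2(2^m - 1) - 3m - 1` and minimum distance
exactly `6`. -/
theorem statement10 {K : Type*} [Field K] [Fintype K] [Algebra (ZMod 2) K]
    (m : ℕ) (hm : 3 ≤ m) (hK : Fintype.card K = 2 ^ m)
    (n : ℕ) (hn : n = 2 ^ m - 1)
    (β : K) (hβ : IsPrimitiveRoot β (2 ^ m - 1)) :
    Module.finrank (ZMod 2)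
        (cyclicCode (ZMod 2) (2 * n)
          ((X - 1) * (minpoly (ZMod 2) β) ^ 2 * minpoly (ZMod 2) (β ^ 3))) =
      2 * (2 ^ m - 1) - 3 * m - 1 ∧
    minDist (cyclicCode (ZMod 2) (2 * n)
        ((X - 1) * (minpoly (ZMod 2) β) ^ 2 * minpoly (ZMod 2) (β ^ 3))) = 6 := by
  subst hn
  have : Module.Finite (ZMod 2) K := Module.finite_iff_finite.mpr inferInstance
  have hint2 : IsIntegral (ZMod 2) β := IsIntegral.of_finite _ _
  have hint3 : IsIntegral (ZMod 2) (β ^ 3) := IsIntegral.of_finite _ _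
  set g : Polynomial (ZMod 2) :=
    (X - 1) * (minpoly (ZMod 2) β) ^ 2 * minpoly (ZMod 2) (β ^ 3) with hg
  have hX1 : (X - 1 : Polynomial (ZMod 2)) = X - C 1 := by rw [map_one]
  have hX1m : (X - 1 : Polynomial (ZMod 2)).Monic := by rw [hX1]; exact monic_X_sub_C 1
  have hmon2 : (minpoly (ZMod 2) β).Monic := minpoly.monic hint2
  have hmon3 : (minpoly (ZMod 2) (β ^ 3)).Monic := minpoly.monic hint3
  have hgm : g.Monic := (hX1m.mul (hmon2.pow 2)).mul hmon3
  have hgd : g ∣ (X : Polynomial (ZMod 2)) ^ (2 * (2 ^ m - 1)) - 1 := gdvd m hm hK β hβ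
  have hgdeg : g.natDegree = 3 * m + 1 := by
    rw [hg, natDegree_mul (mul_ne_zero hX1m.ne_zero (pow_ne_zero 2 hmon2.ne_zero)) hmon3.ne_zero,
      natDegree_mul hX1m.ne_zero (pow_ne_zero 2 hmon2.ne_zero), natDegree_pow,
      hX1, natDegree_X_sub_C, degβ m hm hK β hβ, degβ3 m hm hK β hβ]
    omega
  have hkN : g.natDegree ≤ 2 * (2 ^ m - 1) := by
    rw [hgdeg]; exact deg_le_len m hm
  constructor
  · rw [finrank_cyclicCode hgm hgd hkN, hgdeg]
    omega
  · obtain ⟨c₀, hc₀deg, hc₀dvd, hc₀ne, hc₀card⟩ := exists_wt6 m hm hK β hβ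
    have hc₀mem : c₀ ∈ cyclicCode (ZMod 2) (2 * (2 ^ m - 1)) g :=
      (mem_cyclicCode hgd).mpr ⟨hc₀deg, hc₀dvd⟩
    unfold minDist
    apply le_antisymm
    · apply Nat.sInf_le
      exact ⟨c₀, hc₀mem, hc₀ne, hc₀card⟩
    · apply le_csInf
      · exact ⟨6, c₀, hc₀mem, hc₀ne, hc₀card⟩
      rintro w ⟨c, hcC, hc0, rfl⟩
      obtain ⟨hdeg, hdvd⟩ := (mem_cyclicCode hgd).mp hcC
      exact lower_bound m hm hK β hβ c hc0 hdeg hdvd
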